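/- arXiv:2409.16557 — 2 statements merged into one kernel-verified Lean document; each statement's English description precedes it below -/
import Mathlib

section
/- Let A be the commutative ring generated over ℤ by an element u subject to the relations u² = −2u and 4u = 0. Then A is isomorphic as an abelian group to ℤ ⊕ ℤ/4, with u generating the ℤ/4 summand. -/
open Polynomial

/-- The ring `A = ℤ[u]/(u² + 2u, 4u)`, modeling `K⁰(ℝP⁴)`. -/
noncomputable def KRP4 : Type :=
  Polynomial ℤ ⧸ (Ideal.span {X ^ 2 + 2 * X, 4 * X} : Ideal (Polynomial ℤ))

noncomputable instance : CommRing KRP4 :=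
  inferInstanceAs (CommRing (Polynomial ℤ ⧸
    (Ideal.span {X ^ 2 + 2 * X, 4 * X} : Ideal (Polynomial ℤ))))

/-- The class of `u = X` in `A = ℤ[u]/(u² + 2u, 4u)`. -/
noncomputable def uRP4 : KRP4 :=
  Ideal.Quotient.mk (Ideal.span {X ^ 2 + 2 * X, 4 * X} : Ideal (Polynomial ℤ)) X


namespace KRP4aux

noncomputable def I : Ideal (Polynomial ℤ) := Ideal.span {X ^ 2 + 2 * X, 4 * X}

noncomputable def mk : Polynomial ℤ →+* KRP4 := Ideal.Quotient.mk I

lemma mk_X : mk X = uRP4 := rfl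

lemma gen1_mem : (X ^ 2 + 2 * X : ℤ[X]) ∈ I :=
  Ideal.subset_span (Set.mem_insert _ _)

lemma gen2_mem : (4 * X : ℤ[X]) ∈ I :=
  Ideal.subset_span (Set.mem_insert_of_mem _ rfl)

lemma X3_mem : (X ^ 3 : ℤ[X]) ∈ I := by
  rw [I, Ideal.mem_span_pair]
  exact ⟨X - 2, 1, by ring⟩

lemma u_sq : uRP4 ^ 2 = -2 * uRP4 := by
  have h : mk (X ^ 2 + 2 * X) = 0 := (Ideal.Quotient.eq_zero_iff_mem).2 gen1_mem
  have := h
  rw [map_add, map_mul, map_pow, mk_X] at this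
  have h2 : mk 2 = 2 := map_ofNat mk 2
  rw [h2] at this
  linear_combination this

lemma u_cube : uRP4 ^ 3 = 0 := by
  have h : mk (X ^ 3) = 0 := (Ideal.Quotient.eq_zero_iff_mem).2 X3_mem
  rwa [map_pow, mk_X] at h

lemma four_u : (4 : ℤ) • uRP4 = 0 := by
  have h : mk (4 * X) = 0 := (Ideal.Quotient.eq_zero_iff_mem).2 gen2_mem
  rw [map_mul, mk_X, map_ofNat] at h
  rw [zsmul_eq_mul]
  push_cast
  exact h

end KRP4aux

namespace KRP4aux

lemma mk_repr (p : ℤ[X]) : ∃ n c : ℤ, mk p = (n : KRP4) + (c : KRP4) * uRP4 := by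
  induction p using Polynomial.induction_on' with
  | add p q hp hq =>
    obtain ⟨n1, c1, h1⟩ := hp
    obtain ⟨n2, c2, h2⟩ := hq
    exact ⟨n1 + n2, c1 + c2, by rw [map_add, h1, h2]; push_cast; ring⟩
  | monomial k a =>
    rw [← Polynomial.C_mul_X_pow_eq_monomial, map_mul, map_pow, mk_X]
    have hCa : mk (C a) = (a : KRP4) := by
      have h := map_intCast mk a; rw [← h]; norm_cast
    match k with
    | 0 => exact ⟨a, 0, by rw [hCa]; simp⟩
    | 1 => exact ⟨0, a, by rw [hCa]; simp⟩
    | 2 => exact ⟨0, -2 * a, by rw [hCa, u_sq]; push_cast; ring⟩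
    | (m + 3) =>
      refine ⟨0, 0, ?_⟩
      rw [hCa, pow_add, u_cube]
      simp

noncomputable def F1 : KRP4 →+* ℤ :=
  Ideal.Quotient.lift I (Polynomial.evalRingHom 0) (by
    intro a ha
    have hle : I ≤ RingHom.ker (Polynomial.evalRingHom (0:ℤ)) := by
      rw [I, Ideal.span_le]
      rintro x (rfl | rfl) <;> simp [RingHom.mem_ker]
    exact hle ha)

noncomputable def F2 : KRP4 →+* ZMod 8 :=
  Ideal.Quotient.lift I (Polynomial.eval₂RingHom (Int.castRingHom (ZMod 8)) 2) (by
    intro a ha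
    have hle : I ≤ RingHom.ker (Polynomial.eval₂RingHom (Int.castRingHom (ZMod 8)) 2) := by
      rw [I, Ideal.span_le]
      rintro x (rfl | rfl) <;> simp [RingHom.mem_ker] <;> decide
    exact hle ha)

lemma F1_u : F1 uRP4 = 0 := by
  show (Polynomial.evalRingHom (0:ℤ)) X = 0
  simp

lemma F2_u : F2 uRP4 = 2 := by
  show Polynomial.eval₂ (Int.castRingHom (ZMod 8)) 2 X = 2
  simp

end KRP4aux

namespace KRP4aux

noncomputable def zeta : ZMod 4 →+ KRP4 :=
  ZMod.lift 4 ⟨(zmultiplesHom KRP4) uRP4, four_u⟩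

lemma zeta_intCast (c : ℤ) : zeta ((c : ℤ) : ZMod 4) = (c : KRP4) * uRP4 := by
  rw [zeta, ZMod.lift_coe]
  show c • uRP4 = _
  rw [zsmul_eq_mul]

noncomputable def psi : ℤ × ZMod 4 →+ KRP4 :=
  ((Int.castRingHom KRP4).toAddMonoidHom).coprod zeta

lemma psi_apply (n : ℤ) (m : ZMod 4) : psi (n, m) = (n : KRP4) + zeta m := rfl

lemma psi_surjective : Function.Surjective psi := by
  intro x
  obtain ⟨p, rfl⟩ := Ideal.Quotient.mk_surjective (I := I) x
  obtain ⟨n, c, hp⟩ := mk_repr p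
  exact ⟨(n, ((c : ℤ) : ZMod 4)), by rw [psi_apply, zeta_intCast, ← hp]; rfl⟩

lemma psi_injective : Function.Injective psi := by
  rw [injective_iff_map_eq_zero]
  rintro ⟨n, m⟩ h
  have hm : m = ((m.val : ℤ) : ZMod 4) := by
    push_cast
    rw [ZMod.natCast_val, ZMod.cast_id]
  rw [psi_apply, hm, zeta_intCast] at h
  have h1 : F1 ((n : KRP4) + (m.val : ℤ) * uRP4) = 0 := by rw [h]; simp
  rw [map_add, map_mul, map_intCast, map_intCast, F1_u, mul_zero, add_zero] at h1
  have hn : n = 0 := by exact_mod_cast h1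
  have h2 : F2 ((n : KRP4) + (m.val : ℤ) * uRP4) = 0 := by rw [h]; simp
  rw [map_add, map_mul, map_intCast, map_intCast, F2_u, hn] at h2
  simp only [Int.cast_zero, zero_add] at h2
  have hdvd : (8 : ℤ) ∣ (m.val : ℤ) * 2 := by
    have := (ZMod.intCast_zmod_eq_zero_iff_dvd ((m.val : ℤ) * 2) 8).1 (by push_cast at h2 ⊢; linear_combination h2)
    exact_mod_cast this
  have hlt : m.val < 4 := m.val_lt
  have hval : m.val = 0 := by omega
  have : m = 0 := by rw [hm, hval]; simp
  simp [hn, this]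

end KRP4aux

/-- `A = ℤ[u]/(u² + 2u, 4u)` is isomorphic as an abelian group to `ℤ ⊕ ℤ/4`,
with `u` generating the `ℤ/4` summand. -/
theorem KRP4_addEquiv_int_prod_zmod4 :
    ∃ e : KRP4 ≃+ ℤ × ZMod 4, e uRP4 = (0, 1) := by
  refine ⟨(AddEquiv.ofBijective KRP4aux.psi ⟨KRP4aux.psi_injective, KRP4aux.psi_surjective⟩).symm, ?_⟩
  rw [AddEquiv.symm_apply_eq]
  show uRP4 = KRP4aux.psi (0, 1)
  have : ((1 : ℤ) : ZMod 4) = 1 := by norm_cast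
  rw [KRP4aux.psi_apply, ← this, KRP4aux.zeta_intCast]
  simp
end

section
/- In the ring A = ℤ[u]/(u² + 2u, 4u), the element u has additive order exactly 4, and (u+1)² = 1. -/
/-!
Both claims come from the two relations: `u² + 2u = 0` is `(u + 1)² = 1`, and `4u = 0` bounds the
order of `u` by `4`. Sending `u ↦ 2` respects both relations in `ℤ/8` (`2² + 2·2 = 8`, `4·2 = 8`),
so it gives a ring map `A → ℤ/8` under which `2u ↦ 4 ≠ 0`; hence the order is exactly `4`.
-/

open Polynomial

theorem add_one_sq_eq_one_of_sq_add_two_mul_eq_zero {R : Type*} [CommRing R] {u : R}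
    (h : u ^ 2 + 2 * u = 0) : (u + 1) ^ 2 = 1 := by
  linear_combination h

theorem addOrderOf_eq_four {G : Type*} [AddMonoid G] {u : G} (h4 : 4 • u = 0)
    (h2 : 2 • u ≠ 0) : addOrderOf u = 4 :=
  addOrderOf_eq_prime_pow (p := 2) (n := 1) (by simpa using h2) (by simpa using h4)

namespace KRP4

noncomputable abbrev ideal : Ideal ℤ[X] := Ideal.span {X ^ 2 + 2 * X, 4 * X}

noncomputable abbrev u : ℤ[X] ⧸ ideal := Ideal.Quotient.mk ideal X

theorem u_sq_add_two_mul : u ^ 2 + 2 * u = 0 := by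
  have : (X ^ 2 + 2 * X : ℤ[X]) ∈ ideal := Ideal.subset_span (by simp)
  simpa [map_ofNat] using Ideal.Quotient.eq_zero_iff_mem.2 this

theorem four_nsmul_u : 4 • u = 0 := by
  have : (4 * X : ℤ[X]) ∈ ideal := Ideal.subset_span (by simp)
  simpa [nsmul_eq_mul, map_ofNat] using Ideal.Quotient.eq_zero_iff_mem.2 this

theorem ideal_le_ker_aeval_two : ideal ≤ RingHom.ker (aeval (2 : ZMod 8)).toRingHom := by
  rw [Ideal.span_le, Set.insert_subset_iff, Set.singleton_subset_iff]
  constructor <;> simp [RingHom.mem_ker, map_ofNat] <;> decide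

noncomputable def toZMod8 : ℤ[X] ⧸ ideal →+* ZMod 8 :=
  Ideal.Quotient.lift ideal (aeval (2 : ZMod 8)).toRingHom fun _ hp ↦ ideal_le_ker_aeval_two hp

theorem toZMod8_u : toZMod8 u = 2 := by
  simp [toZMod8]

theorem two_nsmul_u_ne_zero : 2 • u ≠ 0 := by
  intro h
  have h' := congrArg toZMod8 h
  rw [map_nsmul, toZMod8_u, map_zero] at h'
  exact absurd h' (by decide)

end KRP4

open KRP4 in
/-- In `A = ℤ[u]/(u² + 2u, 4u)`, the element `u` has additive order exactly 4 and
`(u + 1)² = 1`. -/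
theorem KRP4_order_and_square :
    addOrderOf (Ideal.Quotient.mk
        (Ideal.span {X ^ 2 + 2 * X, 4 * X} : Ideal (Polynomial ℤ)) X) = 4 ∧
    (Ideal.Quotient.mk (Ideal.span {X ^ 2 + 2 * X, 4 * X} : Ideal (Polynomial ℤ)) X + 1) ^ 2
      = 1 :=
  ⟨addOrderOf_eq_four four_nsmul_u two_nsmul_u_ne_zero,
    add_one_sq_eq_one_of_sq_add_two_mul_eq_zero u_sq_add_two_mul⟩
end
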